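/- arXiv:1709.04278 — 2 statements merged into one kernel-verified Lean document; each statement's English description precedes it below -/
import Mathlib

section
/- Let R be a commutative ring, ι a type, and H = FreeGroup ι. For every injective R[H]-linear map u : M → N between left R[H]-modules, the induced R-linear map I_{R[H]} ⊗_{R[H]} M → I_{R[H]} ⊗_{R[H]} N, sending the class of x ⊗ₜ m to the class of x ⊗ₜ u(m), is injective. -/
/-!
STATEMENT 3: Let `R` be a commutative ring, `ι` a type, and `H = FreeGroup ι`. For every
injective `R[H]`-linear map `u : M → N` between left `R[H]`-modules, the induced
`R`-linear map `I_{R[H]} ⊗_{R[H]} M → I_{R[H]} ⊗_{R[H]} N`, sending the class of `x ⊗ₜ m`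
to the class of `x ⊗ₜ u m`, is injective.
-/
open scoped TensorProduct

/-- The augmentation `R[G] →ₐ[R] R` of the group ring `R[G] = MonoidAlgebra R G`. -/
noncomputable def augmentation (R : Type*) [CommRing R] (G : Type*) [Group G] :
    MonoidAlgebra R G →ₐ[R] R :=
  MonoidAlgebra.lift R R G 1

/-- The augmentation ideal `I_{R[G]}` of the group ring. -/
noncomputable def augIdeal (R : Type*) [CommRing R] (G : Type*) [Group G] :
    Ideal (MonoidAlgebra R G) :=
  RingHom.ker (augmentation R G).toRingHom

theorem mul_of_mem_augIdeal {R : Type*} [CommRing R] {G : Type*} [Group G]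
    (x : augIdeal R G) (g : G) :
    (x : MonoidAlgebra R G) * MonoidAlgebra.of R G g ∈ augIdeal R G := by
  have hx : augmentation R G (x : MonoidAlgebra R G) = 0 := x.2
  simp [augIdeal, RingHom.mem_ker, map_mul, hx]

theorem of_sub_one_mem_augIdeal (R : Type*) [CommRing R] {G : Type*} [Group G] (g : G) :
    MonoidAlgebra.of R G g - 1 ∈ augIdeal R G := by
  simp [augIdeal, RingHom.mem_ker, map_sub, augmentation]

section AugTensor

variable (R : Type*) [CommRing R] (H : Type*) [Group H]
variable (M : Type*) [AddCommGroup M] [Module R M]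
  [Module (MonoidAlgebra R H) M] [IsScalarTower R (MonoidAlgebra R H) M]

noncomputable local instance : AddCommGroup ((augIdeal R H) ⊗[R] M) :=
  @TensorProduct.addCommGroup R _ (augIdeal R H) M _ _ _ _

/-- The `R`-submodule of relations defining `I_{R[H]} ⊗_{R[H]} M` as a quotient of
`I_{R[H]} ⊗[R] M`: it is generated by the elements `(x * h) ⊗ₜ m - x ⊗ₜ (h • m)`. -/
noncomputable def augTensorRel : Submodule R ((augIdeal R H) ⊗[R] M) :=
  Submodule.span R
    {z | ∃ (x : augIdeal R H) (h : H) (m : M),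
      z = (⟨(x : MonoidAlgebra R H) * MonoidAlgebra.of R H h,
            mul_of_mem_augIdeal x h⟩ : augIdeal R H) ⊗ₜ[R] m
          - x ⊗ₜ[R] ((MonoidAlgebra.of R H h) • m)}

/-- The tensor product `I_{R[H]} ⊗_{R[H]} M` of the augmentation ideal with a left
`R[H]`-module `M`. -/
noncomputable def augTensor : Type _ :=
  ((augIdeal R H) ⊗[R] M) ⧸ augTensorRel R H M

noncomputable instance : AddCommGroup (augTensor R H M) :=
  inferInstanceAs (AddCommGroup (((augIdeal R H) ⊗[R] M) ⧸ augTensorRel R H M))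

noncomputable instance : Module R (augTensor R H M) :=
  inferInstanceAs (Module R (((augIdeal R H) ⊗[R] M) ⧸ augTensorRel R H M))

/-- The class of `x ⊗ₜ m` in `I_{R[H]} ⊗_{R[H]} M`. -/
noncomputable def augTensorMk (x : augIdeal R H) (m : M) : augTensor R H M :=
  Submodule.Quotient.mk (x ⊗ₜ[R] m)

end AugTensor

/-!
For the free group `F` on `ι`, every `x` in the augmentation ideal `I` satisfies
`x = ∑ᵢ (xᵢ - 1) * ∂x/∂xᵢ`, where `∂/∂xᵢ` are the (right) Fox derivatives, which obey
`∂(x * h) = ∂x * h + ε(x) ∂h`. Therefore `x ⊗ m ↦ (∂x/∂xᵢ • m)ᵢ` is a well-defined map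
`I ⊗_{R[F]} M → ⊕ᵢ M`, natural in `M`, with left inverse `(mᵢ) ↦ ∑ᵢ (xᵢ - 1) ⊗ mᵢ`.
It intertwines the map induced by `u` with `⊕ᵢ u`, which is injective together with `u`.
-/

open MonoidAlgebra MulOpposite

noncomputable section

section Augmentation

variable {R : Type*} [CommRing R] {G : Type*} [Group G]

@[simp] theorem augmentation_of (g : G) : augmentation R G (of R G g) = 1 := by
  simp [augmentation]

theorem augmentation_eq_zero_of_mem {x : R[G]} (hx : x ∈ augIdeal R G) :
    augmentation R G x = 0 :=
  RingHom.mem_ker.mp hx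

instance : (augIdeal R G).IsTwoSided := inferInstanceAs (RingHom.ker _).IsTwoSided

end Augmentation

section AugTensor

variable (R : Type*) [CommRing R] {H : Type*} [Group H]
variable (M : Type*) [AddCommGroup M] [Module R M] [Module R[H] M]

-- The instance `augTensorRel` is a submodule for; without it, `mkQ` and `liftQ` time out.
local instance : AddCommGroup (augIdeal R H ⊗[R] M) := TensorProduct.addCommGroup

def augTensorMkₗ : augIdeal R H →ₗ[R] M →ₗ[R] augTensor R H M :=
  (TensorProduct.mk R (augIdeal R H) M).compr₂ (augTensorRel R H M).mkQ

@[simp] theorem augTensorMkₗ_apply (x : augIdeal R H) (m : M) :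
    augTensorMkₗ R M x m = augTensorMk R H M x m :=
  rfl

theorem augTensor_hom_ext {P : Type*} [AddCommGroup P] [Module R P]
    {f g : augTensor R H M →ₗ[R] P}
    (h : ∀ x m, f (augTensorMk R H M x m) = g (augTensorMk R H M x m)) : f = g :=
  Submodule.linearMap_qext _ (TensorProduct.ext' h)

theorem augTensorMk_mul_of (x : augIdeal R H) (h : H) (m : M) :
    augTensorMk R H M ⟨x * of R H h, mul_of_mem_augIdeal x h⟩ m
      = augTensorMk R H M x (of R H h • m) :=
  (Submodule.Quotient.eq _).mpr (Submodule.subset_span ⟨x, h, m, rfl⟩)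

theorem augTensorMk_add_right (x : augIdeal R H) (m n : M) :
    augTensorMk R H M x (m + n) = augTensorMk R H M x m + augTensorMk R H M x n :=
  (augTensorMkₗ R M x).map_add m n

theorem augTensorMk_smul_right (r : R) (x : augIdeal R H) (m : M) :
    augTensorMk R H M x (r • m) = r • augTensorMk R H M x m :=
  (augTensorMkₗ R M x).map_smul r m

@[simp] theorem augTensorMk_add_left (x y : augIdeal R H) (m : M) :
    augTensorMk R H M (x + y) m = augTensorMk R H M x m + augTensorMk R H M y m :=
  LinearMap.map_add₂ (augTensorMkₗ R M) x y m

@[simp] theorem augTensorMk_smul_left (r : R) (x : augIdeal R H) (m : M) :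
    augTensorMk R H M (r • x) m = r • augTensorMk R H M x m :=
  LinearMap.map_smul₂ (augTensorMkₗ R M) r x m

theorem augTensorMk_mul [IsScalarTower R R[H] M] (x : augIdeal R H) (a : R[H]) (m : M) :
    augTensorMk R H M ⟨x * a, Ideal.mul_mem_right a _ x.2⟩ m = augTensorMk R H M x (a • m) := by
  induction a using MonoidAlgebra.induction_on with
  | of h => exact augTensorMk_mul_of R M x h m
  | add a b ha hb =>
    have hsplit : (⟨x * (a + b), Ideal.mul_mem_right _ _ x.2⟩ : augIdeal R H)
        = ⟨x * a, Ideal.mul_mem_right a _ x.2⟩ + ⟨x * b, Ideal.mul_mem_right b _ x.2⟩ :=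
      Subtype.ext (mul_add _ _ _)
    rw [hsplit, augTensorMk_add_left, ha, hb, add_smul, ← augTensorMk_add_right]
  | smul r a ha =>
    have hsplit : (⟨x * (r • a), Ideal.mul_mem_right _ _ x.2⟩ : augIdeal R H)
        = r • ⟨x * a, Ideal.mul_mem_right a _ x.2⟩ :=
      Subtype.ext (mul_smul_comm _ _ _)
    rw [hsplit, augTensorMk_smul_left, ha, smul_assoc, ← augTensorMk_smul_right]

end AugTensor

section Fox

variable (R : Type*) [CommRing R] (ι : Type*)

/-- The semidirect product `FreeGroup ι ⋉ (ι →₀ R[FreeGroup ι])` for the action by right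
multiplication. A homomorphism `g ↦ (g, D g)` into it is exactly a map `D` with
`D (g * h) = D g * h + D h`, so Fox derivatives come from lifting `of i ↦ (of i, single i 1)`. -/
@[ext] structure FoxSemidirect where
  elem : FreeGroup ι
  deriv : ι →₀ R[FreeGroup ι]

namespace FoxSemidirect

variable {R ι}

instance : Mul (FoxSemidirect R ι) :=
  ⟨fun p q => ⟨p.elem * q.elem, op (of R _ q.elem) • p.deriv + q.deriv⟩⟩

instance : One (FoxSemidirect R ι) := ⟨⟨1, 0⟩⟩

instance : Inv (FoxSemidirect R ι) :=
  ⟨fun p => ⟨p.elem⁻¹, -(op (of R _ p.elem⁻¹) • p.deriv)⟩⟩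

@[simp] theorem mul_elem (p q : FoxSemidirect R ι) : (p * q).elem = p.elem * q.elem := rfl
@[simp] theorem mul_deriv (p q : FoxSemidirect R ι) :
    (p * q).deriv = op (of R _ q.elem) • p.deriv + q.deriv := rfl
@[simp] theorem one_elem : (1 : FoxSemidirect R ι).elem = 1 := rfl
@[simp] theorem one_deriv : (1 : FoxSemidirect R ι).deriv = 0 := rfl
@[simp] theorem inv_elem (p : FoxSemidirect R ι) : p⁻¹.elem = p.elem⁻¹ := rfl
@[simp] theorem inv_deriv (p : FoxSemidirect R ι) :
    p⁻¹.deriv = -(op (of R _ p.elem⁻¹) • p.deriv) := rfl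

instance : Group (FoxSemidirect R ι) where
  mul_assoc p q r := by
    ext1
    · simp [mul_assoc]
    · simp [smul_add, ← mul_smul, ← op_mul, add_assoc]
  one_mul p := by ext1 <;> simp
  mul_one p := by ext1 <;> simp [← one_def]
  inv_mul_cancel p := by
    ext1
    · simp
    · simp [← mul_smul, ← op_mul, ← one_def]

end FoxSemidirect

def foxLift : FreeGroup ι →* FoxSemidirect R ι :=
  FreeGroup.lift fun i => ⟨.of i, .single i 1⟩

@[simp] theorem foxLift_elem (g : FreeGroup ι) : (foxLift R ι g).elem = g := by
  induction g using FreeGroup.induction_on <;> simp_all [foxLift]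

def foxDeriv (g : FreeGroup ι) : ι →₀ R[FreeGroup ι] := (foxLift R ι g).deriv

@[simp] theorem foxDeriv_one : foxDeriv R ι 1 = 0 := by
  simp [foxDeriv]

theorem foxDeriv_mul (g h : FreeGroup ι) :
    foxDeriv R ι (g * h) = op (of R _ h) • foxDeriv R ι g + foxDeriv R ι h := by
  simp [foxDeriv]

@[simp] theorem foxDeriv_of (i : ι) : foxDeriv R ι (.of i) = .single i 1 := by
  simp [foxDeriv, foxLift]

theorem foxDeriv_inv (g : FreeGroup ι) :
    foxDeriv R ι g⁻¹ = -(op (of R _ g⁻¹) • foxDeriv R ι g) := by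
  simp [foxDeriv]

def foxDerivₗ : R[FreeGroup ι] →ₗ[R] ι →₀ R[FreeGroup ι] :=
  Finsupp.linearCombination R (foxDeriv R ι) ∘ₗ (coeffLinearEquiv R).toLinearMap

@[simp] theorem foxDerivₗ_of (g : FreeGroup ι) : foxDerivₗ R ι (of R _ g) = foxDeriv R ι g := by
  simp [foxDerivₗ]

theorem foxDerivₗ_mul_of (x : R[FreeGroup ι]) (h : FreeGroup ι) :
    foxDerivₗ R ι (x * of R _ h)
      = op (of R _ h) • foxDerivₗ R ι x + augmentation R _ x • foxDeriv R ι h := by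
  induction x using MonoidAlgebra.induction_on with
  | of g => rw [← map_mul, foxDerivₗ_of, foxDerivₗ_of, foxDeriv_mul, augmentation_of, one_smul]
  | add x y hx hy =>
    rw [add_mul, map_add, hx, hy, map_add, map_add, smul_add, add_smul]
    abel
  | smul r x hx =>
    rw [smul_mul_assoc, map_smul, hx, map_smul, smul_add, smul_comm r, map_smul, smul_assoc]

def foxSum : (ι →₀ R[FreeGroup ι]) →ₗ[R] R[FreeGroup ι] :=
  Finsupp.lsum R fun i => LinearMap.mulLeft R (of R _ (.of i) - 1)

@[simp] theorem foxSum_single (i : ι) (a : R[FreeGroup ι]) :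
    foxSum R ι (.single i a) = (of R _ (.of i) - 1) * a := by
  simp [foxSum]

theorem foxSum_op_smul (a : R[FreeGroup ι]) (v : ι →₀ R[FreeGroup ι]) :
    foxSum R ι (op a • v) = foxSum R ι v * a := by
  induction v using Finsupp.induction_linear with
  | zero => simp
  | add v w hv hw => rw [smul_add, map_add, map_add, hv, hw, add_mul]
  | single i b => rw [Finsupp.smul_single, op_smul_eq_mul, foxSum_single, foxSum_single, mul_assoc]

theorem foxSum_mem_augIdeal (v : ι →₀ R[FreeGroup ι]) : foxSum R ι v ∈ augIdeal R _ := by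
  induction v using Finsupp.induction_linear with
  | zero => simp
  | add v w hv hw => simpa using add_mem hv hw
  | single i a => simpa using Ideal.mul_mem_right a _ (of_sub_one_mem_augIdeal R (.of i))

def foxSumAug : (ι →₀ R[FreeGroup ι]) →ₗ[R] augIdeal R (FreeGroup ι) :=
  (foxSum R ι).codRestrict ((augIdeal R _).restrictScalars R) (foxSum_mem_augIdeal R ι)

@[simp] theorem foxSumAug_coe (v : ι →₀ R[FreeGroup ι]) :
    (foxSumAug R ι v : R[FreeGroup ι]) = foxSum R ι v :=
  rfl

theorem foxSum_foxDeriv (g : FreeGroup ι) : foxSum R ι (foxDeriv R ι g) = of R _ g - 1 := by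
  induction g using FreeGroup.induction_on with
  | C1 => rw [foxDeriv_one, map_zero, map_one, sub_self]
  | of i => simp
  | inv_of i ih =>
    rw [foxDeriv_inv, map_neg, foxSum_op_smul, ih, sub_mul, one_mul, ← map_mul, mul_inv_cancel,
      map_one, neg_sub]
  | mul g h ihg ihh =>
    rw [foxDeriv_mul, map_add, foxSum_op_smul, ihg, ihh, map_mul, sub_mul, one_mul,
      sub_add_sub_cancel]

/-- The fundamental formula of Fox calculus. -/
theorem foxSum_foxDerivₗ (x : R[FreeGroup ι]) :
    foxSum R ι (foxDerivₗ R ι x) = x - augmentation R _ x • 1 := by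
  induction x using MonoidAlgebra.induction_on with
  | of g => rw [foxDerivₗ_of, foxSum_foxDeriv, augmentation_of, one_smul]
  | add x y hx hy =>
    rw [map_add, map_add, hx, hy, map_add, add_smul]
    abel
  | smul r x hx => rw [map_smul, map_smul, hx, map_smul, smul_sub, smul_assoc]

end Fox

section FreeModule

variable (R : Type*) [CommRing R] (ι : Type*)
variable (M : Type*) [AddCommGroup M] [Module R M] [Module R[FreeGroup ι] M]

local instance : AddCommGroup (augIdeal R (FreeGroup ι) ⊗[R] M) := TensorProduct.addCommGroup

def finsuppToAugTensor : (ι →₀ M) →ₗ[R] augTensor R (FreeGroup ι) M :=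
  Finsupp.lsum R fun i => augTensorMkₗ R M ⟨of R _ (.of i) - 1, of_sub_one_mem_augIdeal R _⟩

@[simp] theorem finsuppToAugTensor_single (i : ι) (m : M) :
    finsuppToAugTensor R ι M (.single i m)
      = augTensorMk R _ M ⟨of R _ (.of i) - 1, of_sub_one_mem_augIdeal R _⟩ m :=
  Finsupp.lsum_single _ _ _ _

variable [IsScalarTower R R[FreeGroup ι] M]

def finsuppSMulₗ : (ι →₀ R[FreeGroup ι]) →ₗ[R] M →ₗ[R] ι →₀ M :=
  Finsupp.lsum R fun i => (Algebra.lsmul R R M).toLinearMap.compr₂ (Finsupp.lsingle i)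

@[simp] theorem finsuppSMulₗ_single (i : ι) (a : R[FreeGroup ι]) (m : M) :
    finsuppSMulₗ R ι M (.single i a) m = .single i (a • m) := by
  simp [finsuppSMulₗ]

theorem finsuppSMulₗ_op_smul (a : R[FreeGroup ι]) (v : ι →₀ R[FreeGroup ι]) (m : M) :
    finsuppSMulₗ R ι M (op a • v) m = finsuppSMulₗ R ι M v (a • m) := by
  induction v using Finsupp.induction_linear with
  | zero => simp
  | add v w hv hw =>
    rw [smul_add, map_add, map_add, LinearMap.add_apply, LinearMap.add_apply, hv, hw]
  | single i b =>
    rw [Finsupp.smul_single, op_smul_eq_mul, finsuppSMulₗ_single, finsuppSMulₗ_single, mul_smul]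

def augIdealTensorToFinsupp : augIdeal R (FreeGroup ι) ⊗[R] M →ₗ[R] ι →₀ M :=
  TensorProduct.lift
    (finsuppSMulₗ R ι M ∘ₗ foxDerivₗ R ι ∘ₗ (augIdeal R _).subtype.restrictScalars R)

theorem augIdealTensorToFinsupp_tmul (x : augIdeal R (FreeGroup ι)) (m : M) :
    augIdealTensorToFinsupp R ι M (x ⊗ₜ m) = finsuppSMulₗ R ι M (foxDerivₗ R ι x) m :=
  rfl

theorem augTensorRel_le_ker :
    augTensorRel R (FreeGroup ι) M ≤ LinearMap.ker (augIdealTensorToFinsupp R ι M) := by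
  rw [augTensorRel, Submodule.span_le]
  rintro _ ⟨x, h, m, rfl⟩
  rw [SetLike.mem_coe, LinearMap.mem_ker, map_sub, augIdealTensorToFinsupp_tmul,
    augIdealTensorToFinsupp_tmul, foxDerivₗ_mul_of, augmentation_eq_zero_of_mem x.2, zero_smul,
    add_zero, finsuppSMulₗ_op_smul, sub_self]

def augTensorToFinsupp : augTensor R (FreeGroup ι) M →ₗ[R] ι →₀ M :=
  (augTensorRel R (FreeGroup ι) M).liftQ (augIdealTensorToFinsupp R ι M) (augTensorRel_le_ker R ι M)

@[simp] theorem augTensorToFinsupp_mk (x : augIdeal R (FreeGroup ι)) (m : M) :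
    augTensorToFinsupp R ι M (augTensorMk R _ M x m) = finsuppSMulₗ R ι M (foxDerivₗ R ι x) m :=
  rfl

theorem finsuppToAugTensor_finsuppSMulₗ (v : ι →₀ R[FreeGroup ι]) (m : M) :
    finsuppToAugTensor R ι M (finsuppSMulₗ R ι M v m) = augTensorMk R _ M (foxSumAug R ι v) m := by
  suffices (finsuppSMulₗ R ι M).compr₂ (finsuppToAugTensor R ι M)
      = augTensorMkₗ R M ∘ₗ foxSumAug R ι from LinearMap.congr_fun₂ this v m
  refine Finsupp.lhom_ext' fun i => LinearMap.ext₂ fun a m => ?_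
  have hsingle : foxSumAug R ι (.single i a)
      = ⟨(of R _ (.of i) - 1) * a, Ideal.mul_mem_right a _ (of_sub_one_mem_augIdeal R _)⟩ :=
    Subtype.ext (foxSum_single R ι i a)
  simp only [LinearMap.compr₂_apply, LinearMap.comp_apply, Finsupp.lsingle_apply,
    finsuppSMulₗ_single, finsuppToAugTensor_single, hsingle, augTensorMkₗ_apply]
  exact (augTensorMk_mul R M _ a m).symm

theorem finsuppToAugTensor_comp_augTensorToFinsupp :
    finsuppToAugTensor R ι M ∘ₗ augTensorToFinsupp R ι M = LinearMap.id :=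
  augTensor_hom_ext R M fun x m => by
    have hx : foxSumAug R ι (foxDerivₗ R ι x) = x := by
      ext1
      rw [foxSumAug_coe, foxSum_foxDerivₗ, augmentation_eq_zero_of_mem x.2, zero_smul, sub_zero]
    rw [LinearMap.comp_apply, augTensorToFinsupp_mk, finsuppToAugTensor_finsuppSMulₗ, hx,
      LinearMap.id_apply]

theorem augTensorToFinsupp_injective : Function.Injective (augTensorToFinsupp R ι M) :=
  Function.LeftInverse.injective (g := finsuppToAugTensor R ι M)
    (LinearMap.congr_fun (finsuppToAugTensor_comp_augTensorToFinsupp R ι M))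

variable {M} {N : Type*} [AddCommGroup N] [Module R N] [Module R[FreeGroup ι] N]
  [IsScalarTower R R[FreeGroup ι] N]

theorem finsuppSMulₗ_map (u : M →ₗ[R[FreeGroup ι]] N) (v : ι →₀ R[FreeGroup ι]) (m : M) :
    finsuppSMulₗ R ι N v (u m) = (finsuppSMulₗ R ι M v m).mapRange u (map_zero u) := by
  induction v using Finsupp.induction_linear with
  | zero => simp
  | add v w hv hw => simp [hv, hw, Finsupp.mapRange_add]
  | single i a => simp

theorem augTensorToFinsupp_natural (u : M →ₗ[R[FreeGroup ι]] N)
    {T : augTensor R (FreeGroup ι) M →ₗ[R] augTensor R (FreeGroup ι) N}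
    (hT : ∀ x m, T (augTensorMk R _ M x m) = augTensorMk R _ N x (u m)) :
    augTensorToFinsupp R ι N ∘ₗ T
      = Finsupp.mapRange.linearMap (u.restrictScalars R) ∘ₗ augTensorToFinsupp R ι M :=
  augTensor_hom_ext R M fun x m => by simp [hT, finsuppSMulₗ_map]

end FreeModule

end

theorem augTensor_map_injective_of_injective
    (R : Type*) [CommRing R] (ι : Type*)
    (M : Type*) [AddCommGroup M] [Module R M]
    [Module (MonoidAlgebra R (FreeGroup ι)) M]
    [IsScalarTower R (MonoidAlgebra R (FreeGroup ι)) M]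
    (N : Type*) [AddCommGroup N] [Module R N]
    [Module (MonoidAlgebra R (FreeGroup ι)) N]
    [IsScalarTower R (MonoidAlgebra R (FreeGroup ι)) N]
    (u : M →ₗ[MonoidAlgebra R (FreeGroup ι)] N) (hu : Function.Injective u)
    (T : augTensor R (FreeGroup ι) M →ₗ[R] augTensor R (FreeGroup ι) N)
    (hT : ∀ (x : augIdeal R (FreeGroup ι)) (m : M),
      T (augTensorMk R (FreeGroup ι) M x m) = augTensorMk R (FreeGroup ι) N x (u m)) :
    Function.Injective T := by
  have hu' : Function.Injective
      (Finsupp.mapRange.linearMap (u.restrictScalars R) : (ι →₀ M) →ₗ[R] ι →₀ N) :=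
    Finsupp.mapRange_injective _ (map_zero u) hu
  have hcomp : Function.Injective (augTensorToFinsupp R ι N ∘ T) := by
    rw [← LinearMap.coe_comp, augTensorToFinsupp_natural R ι u hT, LinearMap.coe_comp]
    exact hu'.comp (augTensorToFinsupp_injective R ι M)
  exact hcomp.of_comp
end

section
/- Let R be a commutative ring, let A and B be groups, and let M be a left R[A ∗ B]-module; regard M as a left R[A]-module (respectively left R[B]-module) by restricting scalars along the ring homomorphism R[A] → R[A ∗ B] (respectively R[B] → R[A ∗ B]) induced by inl (respectively inr). Then the R-linear map (I_{R[A]} ⊗_{R[A]} M) ⊕ (I_{R[B]} ⊗_{R[B]} M) → I_{R[A ∗ B]} ⊗_{R[A ∗ B]} M, sending the class of x ⊗ₜ m in the first summand to the class of (image of x in R[A ∗ B]) ⊗ₜ m, and similarly for the second summand, is well defined and is an isomorphism of R-modules. -/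
/-!
STATEMENT 5: Let `R` be a commutative ring, `A` and `B` groups, `M` a left
`R[A ∗ B]`-module, regarded as a left `R[A]`-module (resp. `R[B]`-module) by restricting
scalars along the ring homomorphism `R[A] → R[A ∗ B]` (resp. `R[B] → R[A ∗ B]`) induced
by `inl` (resp. `inr`). Then the `R`-linear map
`(I_{R[A]} ⊗_{R[A]} M) ⊕ (I_{R[B]} ⊗_{R[B]} M) → I_{R[A ∗ B]} ⊗_{R[A ∗ B]} M`,
sending the class of `x ⊗ₜ m` in the first summand to the class of
`(image of x in R[A ∗ B]) ⊗ₜ m`, and similarly for the second summand, is well defined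
and an isomorphism of `R`-modules.
-/

open scoped TensorProduct Monoid.Coprod

theorem augmentation_mapDomain (R : Type*) [CommRing R] {H K : Type*} [Group H] [Group K]
    (f : H →* K) (y : MonoidAlgebra R H) :
    augmentation R K (MonoidAlgebra.mapDomainRingHom R f y) = augmentation R H y := by
  have h : (augmentation R K).comp (MonoidAlgebra.mapDomainAlgHom R R f) = augmentation R H := by
    apply MonoidAlgebra.algHom_ext
    intro a
    simp [augmentation, MonoidAlgebra.mapDomainAlgHom]
    exact Subsingleton.elim _ _
  have := DFunLike.congr_fun h y
  simpa [MonoidAlgebra.mapDomainAlgHom] using this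

/-- The ring homomorphism `R[H] → R[K]` induced by a group homomorphism maps the
augmentation ideal into the augmentation ideal. -/
theorem mapDomain_mem_augIdeal (R : Type*) [CommRing R] {H K : Type*} [Group H] [Group K]
    (f : H →* K) (x : augIdeal R H) :
    MonoidAlgebra.mapDomainRingHom R f (x : MonoidAlgebra R H) ∈ augIdeal R K := by
  have hx : augmentation R H (x : MonoidAlgebra R H) = 0 := x.2
  show augmentation R K (MonoidAlgebra.mapDomainRingHom R f (x : MonoidAlgebra R H)) = 0
  rw [augmentation_mapDomain R f (x : MonoidAlgebra R H), hx]

section Restrict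

variable (R : Type*) [CommRing R] {H K : Type*} [Group H] [Group K] (f : H →* K)
variable (M : Type*) [AddCommGroup M] [Module R M]
  [Module (MonoidAlgebra R K) M] [IsScalarTower R (MonoidAlgebra R K) M]

/-- Restriction of scalars along the ring homomorphism `R[H] →+* R[K]` induced by a group
homomorphism `f : H →* K`. -/
noncomputable def restrictedModule : Module (MonoidAlgebra R H) M :=
  Module.compHom M (MonoidAlgebra.mapDomainRingHom R f)

/-- `I_{R[H]} ⊗_{R[H]} M` where `M` is an `R[K]`-module regarded as an `R[H]`-module by
restriction of scalars along `f : H →* K`. -/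
noncomputable def augTensorRestrict : Type _ :=
  @augTensor R _ H _ M _ _ (restrictedModule R f M)

noncomputable instance : AddCommGroup (augTensorRestrict R f M) :=
  inferInstanceAs (AddCommGroup (@augTensor R _ H _ M _ _ (restrictedModule R f M)))

noncomputable instance : Module R (augTensorRestrict R f M) :=
  inferInstanceAs (Module R (@augTensor R _ H _ M _ _ (restrictedModule R f M)))

/-- The class of `x ⊗ₜ m` in `I_{R[H]} ⊗_{R[H]} M`, for the restricted module
structure. -/
noncomputable def augTensorRestrictMk (x : augIdeal R H) (m : M) : augTensorRestrict R f M :=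
  @augTensorMk R _ H _ M _ _ (restrictedModule R f M) x m

end Restrict

/-- Notation for group homomorphisms, elaborated for generic groups. -/
abbrev GroupHom (H K : Type*) [Group H] [Group K] : Type _ := H →* K

/-!
Linear maps out of `I_{R[G]} ⊗_{R[G]} M` into an `R`-module `N` correspond to crossed
homomorphisms `d : G → (M →ₗ[R] N)`, `d (x * y) = d x ∘ ρ y + d y` with `ρ` the action of `G`
on `M`, through `x ⊗ m ↦ ∑ x_g • d g m`; the universal one is `g ↦ (g - 1) ⊗ -`, and the
elements `g - 1` span the augmentation ideal. A crossed homomorphism on `G` is the same as a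
homomorphism `G → (M →ₗ[R] N) ⋊ G` lifting the identity, so on `A ∗ B` it is glued uniquely
from its restrictions to `A` and `B`. Gluing the universal crossed homomorphisms of `A` and `B`
gives the inverse of the map in the statement.
-/

noncomputable section

theorem augmentation_single (R : Type*) [CommRing R] {G : Type*} [Group G] (g : G) (r : R) :
    augmentation R G (MonoidAlgebra.single g r) = r := by
  simp [augmentation, MonoidAlgebra.lift_single]

theorem MonoidAlgebra.mapDomainRingHom_of (R : Type*) [Semiring R] {H K : Type*} [Monoid H]
    [Monoid K] (φ : H →* K) (h : H) :
    MonoidAlgebra.mapDomainRingHom R φ (MonoidAlgebra.of R H h) =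
      MonoidAlgebra.of R K (φ h) := by
  simp [MonoidAlgebra.of_apply, MonoidAlgebra.mapDomain_single]

namespace augIdeal

variable (R : Type*) [CommRing R] {G : Type*} [Group G]

def ofSubOne (g : G) : augIdeal R G :=
  ⟨MonoidAlgebra.of R G g - 1, by simp [augIdeal, RingHom.mem_ker, augmentation]⟩

variable {R} in
def mulOf (x : augIdeal R G) (g : G) : augIdeal R G :=
  ⟨x * MonoidAlgebra.of R G g, mul_of_mem_augIdeal x g⟩

theorem ofSubOne_mul (g h : G) :
    ofSubOne R (g * h) = mulOf (ofSubOne R g) h + ofSubOne R h := by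
  apply Subtype.ext
  simp only [ofSubOne, mulOf, map_mul, Submodule.coe_add, sub_mul, one_mul]
  abel

def proj : MonoidAlgebra R G →ₗ[R] augIdeal R G where
  toFun x := ⟨x - algebraMap R _ (augmentation R G x), by
    show augmentation R G (x - _) = 0
    rw [map_sub, AlgHom.commutes, Algebra.algebraMap_self, RingHom.id_apply, sub_self]⟩
  map_add' x y := by ext1; simp only [map_add, Submodule.coe_add]; abel
  map_smul' r x := by
    ext1
    show r • x - _ = r • (x - _)
    rw [map_smul, smul_sub, smul_eq_mul, map_mul, ← Algebra.smul_def]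

theorem proj_coe (x : augIdeal R G) : proj R (x : MonoidAlgebra R G) = x := by
  ext1
  simp [proj, show augmentation R G x = 0 from x.2]

theorem proj_single (g : G) (r : R) :
    proj R (MonoidAlgebra.single g r) = r • ofSubOne R g := by
  ext1
  show MonoidAlgebra.single g r - algebraMap R _ (augmentation R G (MonoidAlgebra.single g r))
    = r • (MonoidAlgebra.of R G g - 1)
  rw [augmentation_single, smul_sub, MonoidAlgebra.smul_of, Algebra.algebraMap_eq_smul_one]

variable {H K : Type*} [Group H] [Group K]

def map (φ : H →* K) : augIdeal R H →ₗ[R] augIdeal R K where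
  toFun x := ⟨MonoidAlgebra.mapDomainRingHom R φ (x : MonoidAlgebra R H),
    mapDomain_mem_augIdeal R φ x⟩
  map_add' x y := Subtype.ext (map_add (MonoidAlgebra.mapDomainRingHom R φ) x.1 y.1)
  map_smul' r x := Subtype.ext (map_smul (MonoidAlgebra.mapDomainAlgHom R R φ) r x.1)

variable {R}

theorem map_mulOf (φ : H →* K) (x : augIdeal R H) (h : H) :
    map R φ (mulOf x h) = mulOf (map R φ x) (φ h) :=
  Subtype.ext (by
    simp only [map, mulOf, LinearMap.coe_mk, AddHom.coe_mk, map_mul,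
      MonoidAlgebra.mapDomainRingHom_of])

theorem map_ofSubOne (φ : H →* K) (h : H) : map R φ (ofSubOne R h) = ofSubOne R (φ h) :=
  Subtype.ext (by
    simp only [map, ofSubOne, LinearMap.coe_mk, AddHom.coe_mk, map_sub, map_one,
      MonoidAlgebra.mapDomainRingHom_of])

end augIdeal

theorem Representation.ofModule'_apply {R : Type*} [CommSemiring R] {G : Type*} [Monoid G]
    {M : Type*} [AddCommMonoid M] [Module R M] [Module (MonoidAlgebra R G) M]
    [IsScalarTower R (MonoidAlgebra R G) M] (g : G) (m : M) :
    (Representation.ofModule' M : Representation R G M) g m = MonoidAlgebra.of R G g • m := by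
  simp [Representation.ofModule']

section LinearCombination

variable {R : Type*} [Semiring R] {G : Type*} {V : Type*} [AddCommMonoid V] [Module R V]

def MonoidAlgebra.linearCombination (d : G → V) : MonoidAlgebra R G →ₗ[R] V :=
  Finsupp.linearCombination R d ∘ₗ (MonoidAlgebra.coeffLinearEquiv R).toLinearMap

theorem MonoidAlgebra.linearCombination_single (d : G → V) (g : G) (r : R) :
    MonoidAlgebra.linearCombination d (MonoidAlgebra.single g r) = r • d g :=
  Finsupp.linearCombination_single R r g

end LinearCombination

section CrossedHom

variable {R : Type*} [CommSemiring R] {G : Type*} [Group G] {M N : Type*}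
  [AddCommMonoid M] [Module R M] [AddCommGroup N] [Module R N]

def IsCrossedHom (ρ : Representation R G M) (d : G → M →ₗ[R] N) : Prop :=
  ∀ x y, d (x * y) = d x ∘ₗ ρ y + d y

namespace IsCrossedHom

variable {ρ : Representation R G M} {d : G → M →ₗ[R] N}

theorem map_one (hd : IsCrossedHom ρ d) : d 1 = 0 := by
  simpa [Module.End.one_eq_id] using hd 1 1

theorem comp (hd : IsCrossedHom ρ d) {P : Type*} [AddCommGroup P] [Module R P]
    (F : N →ₗ[R] P) : IsCrossedHom ρ (fun x => F ∘ₗ d x) := fun x y => by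
  dsimp only
  rw [hd x y, LinearMap.comp_add, LinearMap.comp_assoc]

end IsCrossedHom

/-- The semidirect product `(M →ₗ[R] N) ⋊ G`. -/
def CrossedPairs (_ : Representation R G M) (N : Type*) [AddCommGroup N] [Module R N] :
    Type _ :=
  (M →ₗ[R] N) × G

namespace CrossedPairs

variable {ρ : Representation R G M}

instance : Group (CrossedPairs ρ N) where
  mul p q := (p.1 ∘ₗ ρ q.2 + q.1, p.2 * q.2)
  one := (0, 1)
  inv p := (-(p.1 ∘ₗ ρ p.2⁻¹), p.2⁻¹)
  mul_assoc p q r := Prod.ext (by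
    show (p.1 ∘ₗ ρ q.2 + q.1) ∘ₗ ρ r.2 + r.1 =
      p.1 ∘ₗ ρ (q.2 * r.2) + (q.1 ∘ₗ ρ r.2 + r.1)
    rw [map_mul, LinearMap.add_comp, Module.End.mul_eq_comp, LinearMap.comp_assoc, add_assoc])
    (mul_assoc p.2 q.2 r.2)
  one_mul p := Prod.ext (by
    show (0 : M →ₗ[R] N) ∘ₗ ρ p.2 + p.1 = p.1
    rw [LinearMap.zero_comp, zero_add]) (one_mul p.2)
  mul_one p := Prod.ext (by
    show p.1 ∘ₗ ρ 1 + 0 = p.1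
    rw [map_one, add_zero]; rfl) (mul_one p.2)
  inv_mul_cancel p := Prod.ext (by
    show (-(p.1 ∘ₗ ρ p.2⁻¹)) ∘ₗ ρ p.2 + p.1 = 0
    rw [LinearMap.neg_comp, LinearMap.comp_assoc, ← Module.End.mul_eq_comp, ← map_mul,
      inv_mul_cancel, map_one, Module.End.one_eq_id, LinearMap.comp_id, neg_add_cancel])
    (inv_mul_cancel p.2)

theorem mul_fst (p q : CrossedPairs ρ N) : (p * q).1 = p.1 ∘ₗ ρ q.2 + q.1 := rfl

theorem mul_snd (p q : CrossedPairs ρ N) : (p * q).2 = p.2 * q.2 := rfl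

end CrossedPairs

def IsCrossedHom.pairHom {ρ : Representation R G M} {H : Type*} [Group H] {φ : H →* G}
    {d : H → M →ₗ[R] N}
    (hd : IsCrossedHom (ρ.comp φ) d) : H →* CrossedPairs ρ N where
  toFun h := (d h, φ h)
  map_one' := Prod.ext hd.map_one φ.map_one
  map_mul' h k := Prod.ext (hd h k) (φ.map_mul h k)

section Coprod

variable {A B : Type*} [Group A] [Group B] {ρ : Representation R (A ∗ B) M}
  {dA : A → M →ₗ[R] N} {dB : B → M →ₗ[R] N}

def coprodCrossedHom (hA : IsCrossedHom (ρ.comp Monoid.Coprod.inl) dA)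
    (hB : IsCrossedHom (ρ.comp Monoid.Coprod.inr) dB) (x : A ∗ B) : M →ₗ[R] N :=
  (Monoid.Coprod.lift hA.pairHom hB.pairHom x).1

variable (hA : IsCrossedHom (ρ.comp Monoid.Coprod.inl) dA)
  (hB : IsCrossedHom (ρ.comp Monoid.Coprod.inr) dB)

theorem coprodCrossedHom_inl (a : A) : coprodCrossedHom hA hB (Monoid.Coprod.inl a) = dA a :=
  congrArg Prod.fst (Monoid.Coprod.lift_apply_inl hA.pairHom hB.pairHom a)

theorem coprodCrossedHom_inr (b : B) : coprodCrossedHom hA hB (Monoid.Coprod.inr b) = dB b :=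
  congrArg Prod.fst (Monoid.Coprod.lift_apply_inr hA.pairHom hB.pairHom b)

theorem isCrossedHom_coprodCrossedHom : IsCrossedHom ρ (coprodCrossedHom hA hB) := by
  have hsnd (x : A ∗ B) : (Monoid.Coprod.lift hA.pairHom hB.pairHom x).2 = x := by
    induction x using Monoid.Coprod.induction_on with
    | inl a => exact congrArg Prod.snd (Monoid.Coprod.lift_apply_inl hA.pairHom hB.pairHom a)
    | inr b => exact congrArg Prod.snd (Monoid.Coprod.lift_apply_inr hA.pairHom hB.pairHom b)
    | mul x y hx hy => rw [map_mul, CrossedPairs.mul_snd, hx, hy]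
  intro x y
  rw [coprodCrossedHom, map_mul, CrossedPairs.mul_fst, hsnd]
  rfl

theorem IsCrossedHom.coprod_ext {d d' : A ∗ B → M →ₗ[R] N} (hd : IsCrossedHom ρ d)
    (hd' : IsCrossedHom ρ d')
    (hl : ∀ a, d (Monoid.Coprod.inl a) = d' (Monoid.Coprod.inl a))
    (hr : ∀ b, d (Monoid.Coprod.inr b) = d' (Monoid.Coprod.inr b)) : d = d' := by
  funext x
  induction x using Monoid.Coprod.induction_on with
  | inl a => exact hl a
  | inr b => exact hr b
  | mul x y hx hy => rw [hd, hd', hx, hy]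

end Coprod

end CrossedHom

theorem IsCrossedHom.linearCombination_mul_of {R : Type*} [CommRing R] {G : Type*} [Group G]
    {M N : Type*} [AddCommGroup M] [Module R M] [AddCommGroup N] [Module R N]
    {ρ : Representation R G M} {d : G → M →ₗ[R] N} (hd : IsCrossedHom ρ d)
    (x : MonoidAlgebra R G) (h : G) :
    MonoidAlgebra.linearCombination d (x * MonoidAlgebra.of R G h) =
      MonoidAlgebra.linearCombination d x ∘ₗ ρ h + augmentation R G x • d h := by
  have key :
      MonoidAlgebra.linearCombination d ∘ₗ LinearMap.mulRight R (MonoidAlgebra.of R G h) =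
      LinearMap.lcomp R N (ρ h) ∘ₗ MonoidAlgebra.linearCombination d +
        (augmentation R G).toLinearMap.smulRight (d h) := by
    refine MonoidAlgebra.lhom_ext' fun g => LinearMap.ext_ring ?_
    simp [MonoidAlgebra.of_apply, MonoidAlgebra.single_mul_single,
      MonoidAlgebra.linearCombination_single, augmentation_single, hd g h, LinearMap.lcomp_apply']
  simpa [LinearMap.lcomp_apply'] using congr($key x)

namespace augTensor

variable {R : Type*} [CommRing R] {H : Type*} [Group H]
  {M : Type*} [AddCommGroup M] [Module R M] [Module (MonoidAlgebra R H) M]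
  {N : Type*} [AddCommGroup N] [Module R N]

-- the instance through which `augTensorRel` is defined
local instance : AddCommGroup (augIdeal R H ⊗[R] M) := TensorProduct.addCommGroup

variable (R H M) in
def mkₗ : augIdeal R H →ₗ[R] M →ₗ[R] augTensor R H M :=
  (TensorProduct.mk R (augIdeal R H) M).compr₂ (augTensorRel R H M).mkQ

theorem mkₗ_mulOf (x : augIdeal R H) (h : H) (m : M) :
    mkₗ R H M (augIdeal.mulOf x h) m = mkₗ R H M x (MonoidAlgebra.of R H h • m) :=
  (Submodule.Quotient.eq _).2 (Submodule.subset_span ⟨x, h, m, rfl⟩)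

def lift (φ : augIdeal R H →ₗ[R] M →ₗ[R] N)
    (hφ : ∀ x h m, φ (augIdeal.mulOf x h) m = φ x (MonoidAlgebra.of R H h • m)) :
    augTensor R H M →ₗ[R] N :=
  (augTensorRel R H M).liftQ (TensorProduct.lift φ) <| by
    rw [augTensorRel, Submodule.span_le]
    rintro _ ⟨x, h, m, rfl⟩
    simp only [SetLike.mem_coe, LinearMap.mem_ker, map_sub, TensorProduct.lift.tmul, sub_eq_zero]
    exact hφ x h m

theorem lift_mkₗ (φ : augIdeal R H →ₗ[R] M →ₗ[R] N)
    (hφ : ∀ x h m, φ (augIdeal.mulOf x h) m = φ x (MonoidAlgebra.of R H h • m))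
    (x : augIdeal R H) (m : M) : lift φ hφ (mkₗ R H M x m) = φ x m :=
  TensorProduct.lift.tmul x m

variable (R H M) in
def crossedHom (g : H) : M →ₗ[R] augTensor R H M :=
  mkₗ R H M (augIdeal.ofSubOne R g)

theorem crossedHom_mul_apply (g h : H) (m : M) :
    crossedHom R H M (g * h) m =
      crossedHom R H M g (MonoidAlgebra.of R H h • m) + crossedHom R H M h m := by
  rw [crossedHom, augIdeal.ofSubOne_mul, map_add, LinearMap.add_apply, mkₗ_mulOf]
  rfl

theorem hom_ext {F F' : augTensor R H M →ₗ[R] N}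
    (h : ∀ g, F ∘ₗ crossedHom R H M g = F' ∘ₗ crossedHom R H M g) : F = F' := by
  have hproj : (mkₗ R H M).compr₂ F ∘ₗ augIdeal.proj R =
      (mkₗ R H M).compr₂ F' ∘ₗ augIdeal.proj R :=
    MonoidAlgebra.lhom_ext' fun g => LinearMap.ext_ring <| by
      simp only [LinearMap.comp_apply, MonoidAlgebra.lsingle_apply, augIdeal.proj_single, one_smul]
      exact h g
  refine Submodule.linearMap_qext _ (TensorProduct.ext (LinearMap.ext₂ fun x m => ?_))
  have := congr($hproj x m)
  simp only [LinearMap.comp_apply, augIdeal.proj_coe] at this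
  exact this

section Representation

variable [IsScalarTower R (MonoidAlgebra R H) M]

theorem isCrossedHom_crossedHom :
    IsCrossedHom (Representation.ofModule' M) (crossedHom R H M) := fun g h =>
  LinearMap.ext fun m => by
    simp only [crossedHom_mul_apply, LinearMap.add_apply, LinearMap.comp_apply,
      Representation.ofModule'_apply]

variable {d : H → M →ₗ[R] N}

def liftCrossedHom (hd : IsCrossedHom (Representation.ofModule' M) d) :
    augTensor R H M →ₗ[R] N :=
  lift (MonoidAlgebra.linearCombination d ∘ₗ (augIdeal R H).subtype.restrictScalars R)
    fun x h m => by
      have hx : augmentation R H x = 0 := x.2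
      show MonoidAlgebra.linearCombination d (x.1 * MonoidAlgebra.of R H h) m =
        MonoidAlgebra.linearCombination d x.1 (MonoidAlgebra.of R H h • m)
      rw [hd.linearCombination_mul_of, hx, zero_smul, add_zero, LinearMap.comp_apply,
        Representation.ofModule'_apply]

theorem liftCrossedHom_comp_crossedHom (hd : IsCrossedHom (Representation.ofModule' M) d)
    (g : H) : liftCrossedHom hd ∘ₗ crossedHom R H M g = d g := by
  ext m
  simp [liftCrossedHom, crossedHom, lift_mkₗ, augIdeal.ofSubOne, MonoidAlgebra.of_apply,
    MonoidAlgebra.one_def, MonoidAlgebra.linearCombination_single, hd.map_one]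

end Representation

end augTensor

theorem restrictedModule_of_smul {R : Type*} [CommRing R] {H K : Type*} [Group H] [Group K]
    (φ : H →* K) {M : Type*} [AddCommGroup M] [Module (MonoidAlgebra R K) M] (h : H) (m : M) :
    (letI := restrictedModule R φ M; MonoidAlgebra.of R H h • m) =
      MonoidAlgebra.of R K (φ h) • m :=
  congrArg (· • m) (MonoidAlgebra.mapDomainRingHom_of R φ h)

namespace augTensorRestrict

variable (R : Type*) [CommRing R] {H K : Type*} [Group H] [Group K] (φ : H →* K)
  (M : Type*) [AddCommGroup M] [Module R M] [Module (MonoidAlgebra R K) M]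
  {N : Type*} [AddCommGroup N] [Module R N]

def crossedHom (h : H) : M →ₗ[R] augTensorRestrict R φ M :=
  letI := restrictedModule R φ M
  augTensor.crossedHom R H M h

theorem isCrossedHom_crossedHom [IsScalarTower R (MonoidAlgebra R K) M] :
    IsCrossedHom ((Representation.ofModule' M).comp φ) (crossedHom R φ M) := fun g h =>
  letI := restrictedModule R φ M
  LinearMap.ext fun m => by
    have := augTensor.crossedHom_mul_apply (R := R) (M := M) g h m
    rw [restrictedModule_of_smul] at this
    exact this

variable {R φ M} in
theorem hom_ext {F F' : augTensorRestrict R φ M →ₗ[R] N}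
    (h : ∀ g, F ∘ₗ crossedHom R φ M g = F' ∘ₗ crossedHom R φ M g) : F = F' :=
  letI := restrictedModule R φ M
  augTensor.hom_ext h

def map : augTensorRestrict R φ M →ₗ[R] augTensor R K M :=
  letI := restrictedModule R φ M
  augTensor.lift (augTensor.mkₗ R K M ∘ₗ augIdeal.map R φ) fun x h m => by
    simp only [LinearMap.comp_apply, augIdeal.map_mulOf, augTensor.mkₗ_mulOf,
      restrictedModule_of_smul]

theorem map_mk (x : augIdeal R H) (m : M) :
    map R φ M (augTensorRestrictMk R φ M x m) = augTensorMk R K M (augIdeal.map R φ x) m :=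
  letI := restrictedModule R φ M
  augTensor.lift_mkₗ _ _ x m

theorem map_comp_crossedHom (h : H) :
    map R φ M ∘ₗ crossedHom R φ M h = augTensor.crossedHom R K M (φ h) :=
  LinearMap.ext fun m => by
    refine (map_mk R φ M (augIdeal.ofSubOne R h) m).trans ?_
    rw [augIdeal.map_ofSubOne]
    rfl

end augTensorRestrict

namespace augTensor

variable (R : Type*) [CommRing R] (A B : Type*) [Group A] [Group B]
  (M : Type*) [AddCommGroup M] [Module R M]
  [Module (MonoidAlgebra R (A ∗ B)) M] [IsScalarTower R (MonoidAlgebra R (A ∗ B)) M]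

local notation "ι₁" => (Monoid.Coprod.inl : A →* A ∗ B)
local notation "ι₂" => (Monoid.Coprod.inr : B →* A ∗ B)

def coprodMap : augTensorRestrict R ι₁ M × augTensorRestrict R ι₂ M →ₗ[R] augTensor R (A ∗ B) M :=
  (augTensorRestrict.map R ι₁ M).coprod (augTensorRestrict.map R ι₂ M)

def coprodInv : augTensor R (A ∗ B) M →ₗ[R] augTensorRestrict R ι₁ M × augTensorRestrict R ι₂ M :=
  liftCrossedHom <| isCrossedHom_coprodCrossedHom
    ((augTensorRestrict.isCrossedHom_crossedHom R ι₁ M).comp (LinearMap.inl R _ _))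
    ((augTensorRestrict.isCrossedHom_crossedHom R ι₂ M).comp (LinearMap.inr R _ _))

theorem coprodMap_comp_coprodInv : coprodMap R A B M ∘ₗ coprodInv R A B M = LinearMap.id := by
  suffices h : (fun x => coprodMap R A B M ∘ₗ coprodInv R A B M ∘ₗ crossedHom R (A ∗ B) M x)
      = crossedHom R (A ∗ B) M from
    hom_ext fun x => by rw [LinearMap.comp_assoc, LinearMap.id_comp]; exact congrFun h x
  simp only [coprodInv, liftCrossedHom_comp_crossedHom]
  refine IsCrossedHom.coprod_ext ((isCrossedHom_coprodCrossedHom _ _).comp _)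
    isCrossedHom_crossedHom (fun a => ?_) (fun b => ?_)
  · rw [coprodCrossedHom_inl, ← LinearMap.comp_assoc, coprodMap, LinearMap.coprod_inl,
      augTensorRestrict.map_comp_crossedHom]
  · rw [coprodCrossedHom_inr, ← LinearMap.comp_assoc, coprodMap, LinearMap.coprod_inr,
      augTensorRestrict.map_comp_crossedHom]

theorem coprodInv_comp_coprodMap : coprodInv R A B M ∘ₗ coprodMap R A B M = LinearMap.id := by
  refine LinearMap.prod_ext (augTensorRestrict.hom_ext fun a => ?_)
    (augTensorRestrict.hom_ext fun b => ?_)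
  · rw [LinearMap.id_comp, LinearMap.comp_assoc _ _ (coprodInv R A B M), coprodMap,
      LinearMap.coprod_inl, LinearMap.comp_assoc, augTensorRestrict.map_comp_crossedHom,
      coprodInv, liftCrossedHom_comp_crossedHom, coprodCrossedHom_inl]
  · rw [LinearMap.id_comp, LinearMap.comp_assoc _ _ (coprodInv R A B M), coprodMap,
      LinearMap.coprod_inr, LinearMap.comp_assoc, augTensorRestrict.map_comp_crossedHom,
      coprodInv, liftCrossedHom_comp_crossedHom, coprodCrossedHom_inr]

def coprodEquiv :
    (augTensorRestrict R ι₁ M × augTensorRestrict R ι₂ M) ≃ₗ[R] augTensor R (A ∗ B) M :=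
  .ofLinearMap (coprodMap R A B M) (coprodInv R A B M) (coprodMap_comp_coprodInv R A B M)
    (coprodInv_comp_coprodMap R A B M)

theorem coprodEquiv_mk_zero (x : augIdeal R A) (m : M) :
    coprodEquiv R A B M (augTensorRestrictMk R ι₁ M x m, 0) =
      augTensorMk R (A ∗ B) M (augIdeal.map R ι₁ x) m := by
  simp only [coprodEquiv, coprodMap, LinearEquiv.coe_ofLinearMap, LinearMap.coprod_apply,
    augTensorRestrict.map_mk, map_zero, add_zero]

theorem coprodEquiv_zero_mk (y : augIdeal R B) (m : M) :
    coprodEquiv R A B M (0, augTensorRestrictMk R ι₂ M y m) =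
      augTensorMk R (A ∗ B) M (augIdeal.map R ι₂ y) m := by
  simp only [coprodEquiv, coprodMap, LinearEquiv.coe_ofLinearMap, LinearMap.coprod_apply,
    augTensorRestrict.map_mk, map_zero, zero_add]

end augTensor

end

theorem exists_linearEquiv_augTensor_coprod
    (R : Type*) [CommRing R] (A B : Type*) [Group A] [Group B]
    (M : Type*) [AddCommGroup M] [Module R M]
    [Module (MonoidAlgebra R (A ∗ B)) M] [IsScalarTower R (MonoidAlgebra R (A ∗ B)) M]
    (f : GroupHom A (A ∗ B)) (g : GroupHom B (A ∗ B))
    (hf : ∀ a : A, f a = Monoid.Coprod.inl a) (hg : ∀ b : B, g b = Monoid.Coprod.inr b) :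
    ∃ e : (augTensorRestrict R f M × augTensorRestrict R g M) ≃ₗ[R]
          augTensor R (A ∗ B) M,
      (∀ (x : augIdeal R A) (m : M),
        e (augTensorRestrictMk R f M x m, 0) =
          augTensorMk R (A ∗ B) M
            ⟨MonoidAlgebra.mapDomainRingHom R f (x : MonoidAlgebra R A),
              mapDomain_mem_augIdeal R f x⟩ m) ∧
      (∀ (y : augIdeal R B) (m : M),
        e (0, augTensorRestrictMk R g M y m) =
          augTensorMk R (A ∗ B) M
            ⟨MonoidAlgebra.mapDomainRingHom R g (y : MonoidAlgebra R B),
              mapDomain_mem_augIdeal R g y⟩ m) := by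
  obtain rfl : f = Monoid.Coprod.inl := MonoidHom.ext hf
  obtain rfl : g = Monoid.Coprod.inr := MonoidHom.ext hg
  exact ⟨augTensor.coprodEquiv R A B M, augTensor.coprodEquiv_mk_zero R A B M,
    augTensor.coprodEquiv_zero_mk R A B M⟩
end
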